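/- arXiv:2009.11105 — 4 statements merged into one kernel-verified Lean document; each statement's English description precedes it below -/
import Mathlib

section
/- Let n ≥ 1, let Ω ⊆ ℝⁿ be an open set, let e : ℝⁿ → ℝⁿ be continuously differentiable with operator norm ‖De(q)‖ ≤ 1/2 for all q ∈ Ω, and for θ ∈ [0,1] define Y_θ : ℝⁿ → ℝⁿ by Y_θ(q) = q + θ e(q). Fix θ ∈ [0,1], assume Y_θ is injective on Ω, let wᶿ : ℝⁿ → ℝ be differentiable at every point of Y_θ(Ω), and let 1 ≤ p < ∞. Then ∫_{Y_θ(Ω)} ‖∇wᶿ(y)‖^p dy ≤ 2^p (3/2)ⁿ ∫_Ω ‖∇(wᶿ∘Y_θ)(q)‖^p dq, where the integrals are with respect to Lebesgue measure. -/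
/-!
Changing variables y = Y_θ(q) turns the left side into ∫_Ω |det DY_θ(q)| ‖∇wᶿ(Y_θ q)‖^p, and by
the chain rule ∇(wᶿ ∘ Y_θ)(q) = ∇wᶿ(Y_θ q) ∘ DY_θ(q) with DY_θ = 1 + θ De. As ‖θ De‖ ≤ 1/2, the map
DY_θ has norm at most 3/2 and an inverse of norm at most 2; since a linear map A sends the unit
ball into the ball of radius ‖A‖ and scales volume by |det A|, this puts |det DY_θ| between 2⁻ⁿ
and (3/2)ⁿ, which yields the pointwise bound. The lower bound matters because a Bochner integral
of a non-integrable function is 0: it makes the two integrands integrable together.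
-/

open MeasureTheory Module

namespace ContinuousLinearMap

section NearIdentity

variable {𝕜 E F : Type*} [NontriviallyNormedField 𝕜] [NormedAddCommGroup E] [NormedSpace 𝕜 E]
  [NormedAddCommGroup F] [NormedSpace 𝕜 F]

theorem norm_le_two_mul_norm_comp_one_add (L : E →L[𝕜] F) {t : E →L[𝕜] E} (ht : ‖t‖ ≤ 1 / 2) :
    ‖L‖ ≤ 2 * ‖L.comp (1 + t)‖ := by
  have hsplit : L = L.comp (1 + t) - L.comp t := by
    rw [comp_add, one_def, comp_id, add_sub_cancel_right]
  have : ‖L‖ ≤ ‖L.comp (1 + t)‖ + ‖L‖ * (1 / 2) :=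
    calc ‖L‖ = ‖L.comp (1 + t) - L.comp t‖ := congrArg _ hsplit
      _ ≤ ‖L.comp (1 + t)‖ + ‖L‖ * ‖t‖ :=
        (norm_sub_le _ _).trans (by gcongr; exact opNorm_comp_le _ _)
      _ ≤ ‖L.comp (1 + t)‖ + ‖L‖ * (1 / 2) := by gcongr
  linarith

theorem norm_one_add_le {t : E →L[𝕜] E} (ht : ‖t‖ ≤ 1 / 2) : ‖1 + t‖ ≤ 3 / 2 :=
  calc ‖1 + t‖ ≤ ‖(1 : E →L[𝕜] E)‖ + ‖t‖ := norm_add_le _ _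
    _ ≤ 1 + 1 / 2 := add_le_add norm_id_le ht
    _ = 3 / 2 := by norm_num

end NearIdentity

variable {E : Type*} [NormedAddCommGroup E] [NormedSpace ℝ E] [FiniteDimensional ℝ E]

theorem abs_det_le_norm_pow (A : E →L[ℝ] E) : |A.det| ≤ ‖A‖ ^ finrank ℝ E := by
  borelize E
  set μ : Measure E := Measure.addHaar
  have hμ : μ (Metric.closedBall 0 1) ≠ 0 := (Metric.measure_closedBall_pos μ _ one_pos).ne'
  have hμ' : μ (Metric.closedBall 0 1) ≠ ⊤ := measure_closedBall_lt_top.ne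
  have himage : A '' Metric.closedBall 0 1 ⊆ Metric.closedBall 0 ‖A‖ := by
    rintro _ ⟨x, hx, rfl⟩
    rw [mem_closedBall_zero_iff] at hx ⊢
    simpa using A.le_opNorm_of_le hx
  have hvol := measure_mono (μ := μ) himage
  rw [Measure.addHaar_image_continuousLinearMap, Measure.addHaar_closedBall' μ 0 (norm_nonneg A),
    ENNReal.mul_le_mul_iff_left hμ hμ', ENNReal.ofReal_le_ofReal_iff (by positivity)] at hvol
  exact hvol

theorem abs_det_one_add_le {t : E →L[ℝ] E} (ht : ‖t‖ ≤ 1 / 2) :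
    |(1 + t).det| ≤ (3 / 2) ^ finrank ℝ E :=
  (abs_det_le_norm_pow _).trans (pow_le_pow_left₀ (norm_nonneg _) (norm_one_add_le ht) _)

theorem one_le_two_pow_mul_abs_det_one_add {t : E →L[ℝ] E} (ht : ‖t‖ ≤ 1 / 2) :
    1 ≤ 2 ^ finrank ℝ E * |(1 + t).det| := by
  have hlt : ‖-t‖ < 1 := by rw [norm_neg]; linarith
  set u := Units.oneSub (-t) hlt
  have hu : (u : E →L[ℝ] E) = 1 + t := by simp [u, sub_neg_eq_add]
  have hinv : ‖(↑u⁻¹ : E →L[ℝ] E)‖ ≤ 2 :=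
    calc ‖(↑u⁻¹ : E →L[ℝ] E)‖ ≤ 2 * ‖(↑u⁻¹ : E →L[ℝ] E).comp (1 + t)‖ :=
          norm_le_two_mul_norm_comp_one_add _ ht
      _ = 2 * ‖(1 : E →L[ℝ] E)‖ := by rw [← hu, ← mul_def, u.inv_mul]
      _ ≤ 2 := mul_le_of_le_one_right zero_le_two norm_id_le
  have hdet : (↑u⁻¹ : E →L[ℝ] E).det * (1 + t).det = 1 := by
    rw [← hu, det, det, ← LinearMap.det_comp, ← toLinearMap_comp, ← mul_def, u.inv_mul, one_def,
      coe_id, LinearMap.det_id]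
  calc (1 : ℝ) = |(↑u⁻¹ : E →L[ℝ] E).det| * |(1 + t).det| := by rw [← abs_mul, hdet, abs_one]
    _ ≤ 2 ^ finrank ℝ E * |(1 + t).det| := by
      gcongr
      exact (abs_det_le_norm_pow _).trans (pow_le_pow_left₀ (norm_nonneg _) hinv _)

variable {F : Type*} [NormedAddCommGroup F] [NormedSpace ℝ F] {p : ℝ}

theorem abs_det_one_add_mul_norm_rpow_le (hp : 0 ≤ p) (L : E →L[ℝ] F) {t : E →L[ℝ] E}
    (ht : ‖t‖ ≤ 1 / 2) :
    |(1 + t).det| * ‖L‖ ^ p ≤ 2 ^ p * (3 / 2) ^ finrank ℝ E * ‖L.comp (1 + t)‖ ^ p :=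
  calc |(1 + t).det| * ‖L‖ ^ p ≤ (3 / 2) ^ finrank ℝ E * (2 * ‖L.comp (1 + t)‖) ^ p := by
        gcongr
        exacts [abs_det_one_add_le ht, norm_le_two_mul_norm_comp_one_add L ht]
    _ = 2 ^ p * (3 / 2) ^ finrank ℝ E * ‖L.comp (1 + t)‖ ^ p := by
        rw [Real.mul_rpow zero_le_two (norm_nonneg _)]; ring

theorem norm_comp_one_add_rpow_le (hp : 0 ≤ p) (L : E →L[ℝ] F) {t : E →L[ℝ] E}
    (ht : ‖t‖ ≤ 1 / 2) :
    ‖L.comp (1 + t)‖ ^ p ≤ (3 / 2) ^ p * 2 ^ finrank ℝ E * (|(1 + t).det| * ‖L‖ ^ p) :=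
  calc ‖L.comp (1 + t)‖ ^ p ≤ (‖L‖ * (3 / 2)) ^ p * 1 := by
        rw [mul_one]
        gcongr
        exact (opNorm_comp_le _ _).trans (by gcongr; exact norm_one_add_le ht)
    _ ≤ (‖L‖ * (3 / 2)) ^ p * (2 ^ finrank ℝ E * |(1 + t).det|) := by
        gcongr
        exact one_le_two_pow_mul_abs_det_one_add ht
    _ = (3 / 2) ^ p * 2 ^ finrank ℝ E * (|(1 + t).det| * ‖L‖ ^ p) := by
        rw [Real.mul_rpow (norm_nonneg _) (by norm_num)]; ring

end ContinuousLinearMap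

theorem MeasureTheory.integral_le_mul_integral_of_ae_le_mul {α : Type*} [MeasurableSpace α]
    {μ : Measure α} {f g : α → ℝ} {a b : ℝ} (hg : AEStronglyMeasurable g μ)
    (hf0 : 0 ≤ᵐ[μ] f) (hg0 : 0 ≤ᵐ[μ] g) (hfg : ∀ᵐ x ∂μ, f x ≤ a * g x)
    (hgf : ∀ᵐ x ∂μ, g x ≤ b * f x) :
    ∫ x, f x ∂μ ≤ a * ∫ x, g x ∂μ := by
  by_cases hgi : Integrable g μ
  · rw [← integral_const_mul]
    exact integral_mono_of_nonneg hf0 (hgi.const_mul a) hfg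
  · have hfi : ¬Integrable f μ := fun hfi => hgi <| (hfi.const_mul b).mono' hg <| by
      filter_upwards [hg0, hgf] with x hx0 hx
      rwa [Real.norm_of_nonneg hx0]
    rw [integral_undef hfi, integral_undef hgi, mul_zero]

theorem stmt6_general (n : ℕ) (Ω : Set (EuclideanSpace ℝ (Fin n))) (hΩ : IsOpen Ω)
    (e : EuclideanSpace ℝ (Fin n) → EuclideanSpace ℝ (Fin n)) (he : ContDiff ℝ 1 e)
    (hbound : ∀ q ∈ Ω, ‖fderiv ℝ e q‖ ≤ 1 / 2)
    (θ : ℝ) (hθ : θ ∈ Set.Icc (0:ℝ) 1)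
    (hinj : Set.InjOn (fun q => q + θ • e q) Ω)
    (wθ : EuclideanSpace ℝ (Fin n) → ℝ)
    (hwθ : ∀ y ∈ (fun q => q + θ • e q) '' Ω, DifferentiableAt ℝ wθ y)
    (p : ℝ) (hp : 1 ≤ p) :
    ∫ y in (fun q => q + θ • e q) '' Ω, ‖fderiv ℝ wθ y‖ ^ p
      ≤ 2 ^ p * (3 / 2 : ℝ) ^ n
          * ∫ q in Ω, ‖fderiv ℝ (fun x => wθ (x + θ • e x)) q‖ ^ p := by
  have hp0 : 0 ≤ p := by linarith
  have hY : ∀ q, HasFDerivAt (fun x => x + θ • e x) (1 + θ • fderiv ℝ e q) q := fun q =>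
    (hasFDerivAt_id q).add ((he.differentiable one_ne_zero q).hasFDerivAt.const_smul θ)
  have hsmall : ∀ q ∈ Ω, ‖θ • fderiv ℝ e q‖ ≤ 1 / 2 := fun q hq => by
    rw [norm_smul, Real.norm_of_nonneg hθ.1]
    exact (mul_le_of_le_one_left (norm_nonneg _) hθ.2).trans (hbound q hq)
  have hchain : ∀ q ∈ Ω, fderiv ℝ (fun x => wθ (x + θ • e x)) q
      = (fderiv ℝ wθ (q + θ • e q)).comp (1 + θ • fderiv ℝ e q) := fun q hq =>
    ((hwθ _ ⟨q, hq, rfl⟩).hasFDerivAt.comp q (hY q)).fderiv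
  rw [integral_image_eq_integral_abs_det_fderiv_smul volume hΩ.measurableSet
    (fun q _ => (hY q).hasFDerivWithinAt) hinj]
  refine integral_le_mul_integral_of_ae_le_mul (b := (3 / 2) ^ p * 2 ^ n)
    ((measurable_fderiv ℝ _).norm.pow_const p).aestronglyMeasurable
    (ae_of_all _ fun q => by positivity) (ae_of_all _ fun q => by positivity)
    (ae_restrict_of_forall_mem hΩ.measurableSet fun q hq => ?_)
    (ae_restrict_of_forall_mem hΩ.measurableSet fun q hq => ?_)
  all_goals rw [hchain q hq, smul_eq_mul]
  · simpa only [finrank_euclideanSpace_fin] using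
      ContinuousLinearMap.abs_det_one_add_mul_norm_rpow_le hp0 _ (hsmall q hq)
  · simpa only [finrank_euclideanSpace_fin] using
      ContinuousLinearMap.norm_comp_one_add_rpow_le hp0 _ (hsmall q hq)

/-- L^p gradient bound for a transported function: if ‖De‖ ≤ 1/2 on Ω and
Y_θ(q) = q + θe(q) is injective on Ω, then for 1 ≤ p < ∞,
∫_{Y_θ(Ω)} ‖∇wᶿ‖^p ≤ 2^p (3/2)ⁿ ∫_Ω ‖∇(wᶿ∘Y_θ)‖^p. -/
theorem stmt6 (n : ℕ) (hn : 1 ≤ n) (Ω : Set (EuclideanSpace ℝ (Fin n))) (hΩ : IsOpen Ω)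
    (e : EuclideanSpace ℝ (Fin n) → EuclideanSpace ℝ (Fin n)) (he : ContDiff ℝ 1 e)
    (hbound : ∀ q ∈ Ω, ‖fderiv ℝ e q‖ ≤ 1 / 2)
    (θ : ℝ) (hθ : θ ∈ Set.Icc (0:ℝ) 1)
    (hinj : Set.InjOn (fun q => q + θ • e q) Ω)
    (wθ : EuclideanSpace ℝ (Fin n) → ℝ)
    (hwθ : ∀ y ∈ (fun q => q + θ • e q) '' Ω, DifferentiableAt ℝ wθ y)
    (p : ℝ) (hp : 1 ≤ p) :
    ∫ y in (fun q => q + θ • e q) '' Ω, ‖fderiv ℝ wθ y‖ ^ p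
      ≤ 2 ^ p * (3 / 2 : ℝ) ^ n
          * ∫ q in Ω, ‖fderiv ℝ (fun x => wθ (x + θ • e x)) q‖ ^ p :=
  stmt6_general n Ω hΩ e he hbound θ hθ hinj wθ hwθ p hp
end

section
/- Let N ≥ 1, T > 0 and c₀, c₁, c₂ ≥ 0. Let A : [0,T] → ℝ^{N×N} be a continuously differentiable family of symmetric matrices with A(t) positive definite for each t ∈ [0,T], and suppose |wᵀ A'(t) z| ≤ c₀ ‖w‖_{A(t)} ‖z‖_{A(t)} for all t ∈ [0,T] and all w, z ∈ ℝᴺ. Let d : [0,T] → ℝ be continuous, and let e : [0,T] → ℝᴺ be continuously differentiable with e(0) = 0 and ‖e'(t)‖²_{A(t)} ≤ c₁ ‖e(t)‖²_{A(t)} + c₂ d(t)² for all t ∈ [0,T]. Then there exists a constant C, depending only on c₀, c₁, c₂ and T, such that for all t ∈ [0,T]: ‖e(t)‖²_{A(t)} ≤ C ∫₀ᵗ d(s)² ds, and ‖e'(t)‖²_{A(t)} ≤ C ( d(t)² + ∫₀ᵗ d(s)² ds ). -/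
/-!
The energy `φ(t) = e(t)ᵀ A(t) e(t) = ‖e(t)‖²_{A(t)}` has derivative `e'ᵀAe + eᵀA'e + eᵀAe'`.
Expanding `(e - e')ᵀA(e - e') ≥ 0` gives `e'ᵀAe + eᵀAe' ≤ φ + ‖e'‖²_A`, so the two hypotheses
yield `φ' ≤ (1 + c₀ + c₁) φ + c₂ d²`. Since `φ(0) = 0`, Gronwall's inequality with a forcing
term bounds `φ(t)` by `c₂ e^{(1 + c₀ + c₁)T} ∫₀ᵗ d²`, and the bound on `e'` follows by
inserting this into the hypothesis on `‖e'‖²_A`.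
-/

open Matrix MeasureTheory

/-- The norm ‖w‖_A = √(wᵀ A w) induced by a (positive semidefinite) matrix A. -/
noncomputable def matNorm {N : ℕ} (A : Matrix (Fin N) (Fin N) ℝ) (w : Fin N → ℝ) : ℝ :=
  Real.sqrt (w ⬝ᵥ A.mulVec w)

open Set Real

theorem le_exp_mul_add_integral_of_hasDerivAt_le {φ φ' g : ℝ → ℝ} {K a b : ℝ}
    (hab : a ≤ b) (hK : 0 ≤ K) (hφ : ∀ s ∈ Icc a b, HasDerivAt φ (φ' s) s)
    (hg : IntegrableOn g (Icc a b)) (hg₀ : ∀ s ∈ Ioo a b, 0 ≤ g s)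
    (hφ' : ∀ s ∈ Ioo a b, φ' s ≤ K * φ s + g s) :
    φ b ≤ exp (K * (b - a)) * (φ a + ∫ s in a..b, g s) := by
  set ψ : ℝ → ℝ := fun s => exp (-K * (s - a)) * φ s
  have hψ : ∀ s ∈ Icc a b,
      HasDerivAt ψ (exp (-K * (s - a)) * (φ' s - K * φ s)) s := fun s hs => by
    have hexp := ((hasDerivAt_id' (x := s)).sub_const a |>.const_mul (-K)).exp
    exact (hexp.mul (hφ s hs)).congr_deriv (by ring)
  have hψ' : ∀ s ∈ Ioo a b, exp (-K * (s - a)) * (φ' s - K * φ s) ≤ g s := fun s hs => by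
    have hexp_le : exp (-K * (s - a)) ≤ 1 :=
      exp_le_one_iff.2 (by nlinarith [hs.1])
    calc exp (-K * (s - a)) * (φ' s - K * φ s) ≤ exp (-K * (s - a)) * g s := by
          gcongr; linarith [hφ' s hs]
      _ ≤ g s := mul_le_of_le_one_left (hg₀ s hs) hexp_le
  have hint := intervalIntegral.sub_le_integral_of_hasDeriv_right_of_le hab
    (fun s hs => (hψ s hs).continuousAt.continuousWithinAt)
    (fun s hs => (hψ s (Ioo_subset_Icc_self hs)).hasDerivWithinAt) hg hψ'
  have hψb : exp (-K * (b - a)) * φ b ≤ φ a + ∫ s in a..b, g s := by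
    simp only [ψ, sub_self, mul_zero, exp_zero, one_mul] at hint
    linarith
  calc φ b = exp (K * (b - a)) * (exp (-K * (b - a)) * φ b) := by
        rw [← mul_assoc, ← exp_add]; ring_nf; simp
    _ ≤ exp (K * (b - a)) * (φ a + ∫ s in a..b, g s) := by gcongr

theorem Matrix.hasDerivAt_dotProduct_mulVec {n : Type*} [Fintype n] {u v : ℝ → n → ℝ}
    {u' v' : n → ℝ} {A : ℝ → Matrix n n ℝ} {A' : Matrix n n ℝ} {t : ℝ}
    (hu : HasDerivAt u u' t) (hA : ∀ i j, HasDerivAt (fun s => A s i j) (A' i j) t)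
    (hv : HasDerivAt v v' t) :
    HasDerivAt (fun s => u s ⬝ᵥ A s *ᵥ v s)
      (u' ⬝ᵥ A t *ᵥ v t + u t ⬝ᵥ A' *ᵥ v t + u t ⬝ᵥ A t *ᵥ v') t := by
  have hsum : HasDerivAt (fun s => ∑ i, ∑ j, u s i * (A s i j * v s j))
      (∑ i, ∑ j, (u' i * (A t i j * v t j) + u t i * (A' i j * v t j + A t i j * v' j))) t :=
    HasDerivAt.fun_sum fun i _ => HasDerivAt.fun_sum fun j _ =>
      (hasDerivAt_pi.1 hu i).mul ((hA i j).mul (hasDerivAt_pi.1 hv j))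
  convert hsum using 1
  · funext s
    simp [dotProduct, mulVec, Finset.mul_sum]
  · simp only [dotProduct, mulVec, Finset.mul_sum, ← Finset.sum_add_distrib]
    refine Finset.sum_congr rfl fun i _ => Finset.sum_congr rfl fun j _ => ?_
    ring

theorem Matrix.PosSemidef.dotProduct_mulVec_add_le {n : Type*} [Fintype n]
    {A : Matrix n n ℝ} (hA : A.PosSemidef) (x y : n → ℝ) :
    x ⬝ᵥ A *ᵥ y + y ⬝ᵥ A *ᵥ x ≤ x ⬝ᵥ A *ᵥ x + y ⬝ᵥ A *ᵥ y := by
  have h := hA.dotProduct_mulVec_nonneg (x - y)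
  simp only [star_trivial, mulVec_sub, sub_dotProduct, dotProduct_sub] at h
  linarith

theorem matNorm_sq {N : ℕ} {A : Matrix (Fin N) (Fin N) ℝ} (hA : A.PosSemidef) (x : Fin N → ℝ) :
    matNorm A x ^ 2 = x ⬝ᵥ A *ᵥ x :=
  Real.sq_sqrt (by simpa using hA.dotProduct_mulVec_nonneg x)

theorem energy_deriv_le {N : ℕ} {A A' : Matrix (Fin N) (Fin N) ℝ} (hA : A.PosSemidef)
    {c₀ c₁ r : ℝ} {x y : Fin N → ℝ}
    (hA' : |x ⬝ᵥ A' *ᵥ x| ≤ c₀ * matNorm A x * matNorm A x)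
    (hy : matNorm A y ^ 2 ≤ c₁ * matNorm A x ^ 2 + r) :
    y ⬝ᵥ A *ᵥ x + x ⬝ᵥ A' *ᵥ x + x ⬝ᵥ A *ᵥ y ≤ (1 + c₀ + c₁) * (x ⬝ᵥ A *ᵥ x) + r := by
  rw [mul_assoc, ← sq, matNorm_sq hA] at hA'
  rw [matNorm_sq hA, matNorm_sq hA] at hy
  linarith [hA.dotProduct_mulVec_add_le x y, le_of_abs_le hA']

theorem stmt8_general (T c₀ c₁ c₂ : ℝ) (hc₀ : 0 ≤ c₀) (hc₁ : 0 ≤ c₁) (hc₂ : 0 ≤ c₂) :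
    ∃ C : ℝ, ∀ (N : ℕ), 1 ≤ N →
      ∀ (A A' : ℝ → Matrix (Fin N) (Fin N) ℝ),
        (∀ t ∈ Set.Icc (0:ℝ) T, ∀ i j, HasDerivAt (fun s => A s i j) (A' t i j) t) →
        (∀ i j, ContinuousOn (fun s => A' s i j) (Set.Icc (0:ℝ) T)) →
        (∀ t ∈ Set.Icc (0:ℝ) T, (A t).PosDef) →
        (∀ t ∈ Set.Icc (0:ℝ) T, ∀ w z : Fin N → ℝ,
          |w ⬝ᵥ (A' t).mulVec z| ≤ c₀ * matNorm (A t) w * matNorm (A t) z) →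
        ∀ d : ℝ → ℝ, ContinuousOn d (Set.Icc (0:ℝ) T) →
        ∀ e e' : ℝ → (Fin N → ℝ),
          (∀ t ∈ Set.Icc (0:ℝ) T, HasDerivAt e (e' t) t) →
          ContinuousOn e' (Set.Icc (0:ℝ) T) →
          e 0 = 0 →
          (∀ t ∈ Set.Icc (0:ℝ) T,
            matNorm (A t) (e' t) ^ 2 ≤ c₁ * matNorm (A t) (e t) ^ 2 + c₂ * d t ^ 2) →
          ∀ t ∈ Set.Icc (0:ℝ) T,
            matNorm (A t) (e t) ^ 2 ≤ C * ∫ s in (0:ℝ)..t, d s ^ 2 ∧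
            matNorm (A t) (e' t) ^ 2 ≤ C * (d t ^ 2 + ∫ s in (0:ℝ)..t, d s ^ 2) := by
  set K := 1 + c₀ + c₁
  refine ⟨(1 + c₁) * c₂ * exp (K * T), ?_⟩
  intro N _ A A' hA _ hPD hA' d hd e e' he _ he0 hee' t ht
  have hsub : Icc 0 t ⊆ Icc 0 T := Icc_subset_Icc_right ht.2
  have hsub' : Ioo 0 t ⊆ Icc 0 T := Ioo_subset_Icc_self.trans hsub
  have hpsd : ∀ s ∈ Icc 0 T, (A s).PosSemidef := fun s hs => (hPD s hs).posSemidef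
  have hgron := le_exp_mul_add_integral_of_hasDerivAt_le (φ := fun s => e s ⬝ᵥ A s *ᵥ e s)
    (g := fun s => c₂ * d s ^ 2) ht.1 (by positivity)
    (fun s hs => hasDerivAt_dotProduct_mulVec (he s (hsub hs)) (hA s (hsub hs)) (he s (hsub hs)))
    ((continuousOn_const.mul (hd.pow 2)).mono hsub).integrableOn_Icc (fun s _ => by positivity)
    (fun s hs => energy_deriv_le (hpsd s (hsub' hs)) (hA' s (hsub' hs) _ _) (hee' s (hsub' hs)))
  simp only [he0, zero_dotProduct, zero_add, sub_zero, intervalIntegral.integral_const_mul,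
    ← matNorm_sq (hpsd t ht)] at hgron
  have hI : 0 ≤ ∫ s in (0:ℝ)..t, d s ^ 2 :=
    intervalIntegral.integral_nonneg ht.1 fun s _ => sq_nonneg _
  have hE : 1 ≤ exp (K * T) := one_le_exp (by nlinarith [ht.1, ht.2])
  have henergy : matNorm (A t) (e t) ^ 2 ≤ c₂ * exp (K * T) * ∫ s in (0:ℝ)..t, d s ^ 2 :=
    calc _ ≤ exp (K * t) * (c₂ * ∫ s in (0:ℝ)..t, d s ^ 2) := hgron
      _ ≤ exp (K * T) * (c₂ * ∫ s in (0:ℝ)..t, d s ^ 2) := by gcongr; exact ht.2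
      _ = _ := by ring
  constructor
  · nlinarith [mul_nonneg (mul_nonneg hc₁ hc₂) (mul_nonneg (exp_pos (K * T)).le hI)]
  · have hE₁ : 1 ≤ (1 + c₁) * exp (K * T) := by nlinarith
    nlinarith [hee' t ht, mul_le_mul_of_nonneg_left henergy hc₁,
      mul_le_mul_of_nonneg_right hE₁ (mul_nonneg hc₂ (sq_nonneg (d t))),
      mul_nonneg hc₂ (mul_nonneg (exp_pos (K * T)).le hI)]

/-- Abstract energy estimate (core of the stability Lemma 6.1): for a C¹ family of
symmetric positive definite matrices A(t) with |wᵀA'(t)z| ≤ c₀‖w‖_{A(t)}‖z‖_{A(t)},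
and a C¹ error e(t) with e(0) = 0 satisfying
‖e'(t)‖²_{A(t)} ≤ c₁‖e(t)‖²_{A(t)} + c₂ d(t)², there is a constant C depending only on
c₀, c₁, c₂, T with ‖e(t)‖²_{A(t)} ≤ C∫₀ᵗ d² and ‖e'(t)‖²_{A(t)} ≤ C(d(t)² + ∫₀ᵗ d²). -/
theorem stmt8 (T c₀ c₁ c₂ : ℝ) (hT : 0 < T) (hc₀ : 0 ≤ c₀) (hc₁ : 0 ≤ c₁) (hc₂ : 0 ≤ c₂) :
    ∃ C : ℝ, ∀ (N : ℕ), 1 ≤ N →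
      ∀ (A A' : ℝ → Matrix (Fin N) (Fin N) ℝ),
        (∀ t ∈ Set.Icc (0:ℝ) T, ∀ i j, HasDerivAt (fun s => A s i j) (A' t i j) t) →
        (∀ i j, ContinuousOn (fun s => A' s i j) (Set.Icc (0:ℝ) T)) →
        (∀ t ∈ Set.Icc (0:ℝ) T, (A t).PosDef) →
        (∀ t ∈ Set.Icc (0:ℝ) T, ∀ w z : Fin N → ℝ,
          |w ⬝ᵥ (A' t).mulVec z| ≤ c₀ * matNorm (A t) w * matNorm (A t) z) →
        ∀ d : ℝ → ℝ, ContinuousOn d (Set.Icc (0:ℝ) T) →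
        ∀ e e' : ℝ → (Fin N → ℝ),
          (∀ t ∈ Set.Icc (0:ℝ) T, HasDerivAt e (e' t) t) →
          ContinuousOn e' (Set.Icc (0:ℝ) T) →
          e 0 = 0 →
          (∀ t ∈ Set.Icc (0:ℝ) T,
            matNorm (A t) (e' t) ^ 2 ≤ c₁ * matNorm (A t) (e t) ^ 2 + c₂ * d t ^ 2) →
          ∀ t ∈ Set.Icc (0:ℝ) T,
            matNorm (A t) (e t) ^ 2 ≤ C * ∫ s in (0:ℝ)..t, d s ^ 2 ∧
            matNorm (A t) (e' t) ^ 2 ≤ C * (d t ^ 2 + ∫ s in (0:ℝ)..t, d s ^ 2) :=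
  stmt8_general T c₀ c₁ c₂ hc₀ hc₁ hc₂
end

section
/- Let n ≥ 1, let Ω ⊆ ℝⁿ be a bounded open set, let e : ℝⁿ → ℝⁿ be continuously differentiable with operator norm ‖De(p)‖ ≤ 1/2 for all p ∈ Ω, and let w, z : Ω → ℝ be measurable functions such that the product w·z is Lebesgue integrable on Ω. Then ∫_Ω w(p) z(p) det(Iₙ + De(p)) dp − ∫_Ω w(p) z(p) dp = ∫₀¹ ( ∫_Ω w(p) z(p) · tr( De(p) (Iₙ + θ De(p))⁻¹ ) · det(Iₙ + θ De(p)) dp ) dθ. -/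
/-!
For a fixed point `p`, write `A` for the matrix of `De(p)`. On `θ ∈ [0, 1]` the matrix `1 + θA`
is invertible (a Neumann series, as `‖θ De(p)‖ ≤ 1/2`), and Jacobi's formula gives
`d/dθ det(1 + θA) = tr(A (1 + θA)⁻¹) det(1 + θA) = tr(A adj(1 + θA))`. By the fundamental theorem
of calculus the `θ`-integral of the right-hand integrand is therefore `det(1 + De(p)) - 1`.
Unlike the inverse, the adjugate form `tr(A adj(1 + θA))` is jointly continuous in `(θ, p)`, hence
bounded on the compact set `[0, 1] × closure Ω`; since `wz` is integrable on `Ω`, Fubini's theorem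
lets us exchange the two integrals.
-/

open MeasureTheory Set

theorem map_ringInverse {F M N : Type*} [MonoidWithZero M] [MonoidWithZero N] [EquivLike F M N]
    [MulEquivClass F M N] (f : F) (x : M) : f (Ring.inverse x) = Ring.inverse (f x) := by
  by_cases hx : IsUnit x
  · calc f (Ring.inverse x) = Ring.inverse (f x) * (f x * f (Ring.inverse x)) := by
          rw [Ring.inverse_mul_cancel_left _ _ (hx.map f)]
      _ = Ring.inverse (f x) := by
          rw [← map_mul, Ring.mul_inverse_cancel x hx, map_one, mul_one]
  · rw [Ring.inverse_non_unit x hx, Ring.inverse_non_unit _ (mt (isUnit_map_iff f x).1 hx),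
      map_zero]

theorem isUnit_one_add_of_norm_lt_one {R : Type*} [NormedRing R] [HasSummableGeomSeries R] {x : R}
    (hx : ‖x‖ < 1) : IsUnit (1 + x) := by
  have h := (Units.oneSub (-x) (by rwa [norm_neg])).isUnit
  rwa [Units.val_oneSub, sub_neg_eq_add] at h

theorem intervalIntegral_setIntegral_mul_swap {α : Type*} [MeasurableSpace α] {μ : Measure α}
    [SFinite μ] {s : Set α} (hs : MeasurableSet s) {a b C : ℝ} (hab : a ≤ b) {f : α → ℝ}
    {g : ℝ → α → ℝ} (hf : IntegrableOn f s μ)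
    (hg : AEStronglyMeasurable (Function.uncurry g)
      ((volume.restrict (Ioc a b)).prod (μ.restrict s)))
    (hgC : ∀ t ∈ Ioc a b, ∀ x ∈ s, ‖g t x‖ ≤ C) :
    ∫ t in a..b, ∫ x in s, f x * g t x ∂μ = ∫ x in s, f x * (∫ t in a..b, g t x) ∂μ := by
  have hmem : ∀ᵐ q ∂(volume.restrict (Ioc a b)).prod (μ.restrict s), q ∈ Ioc a b ×ˢ s := by
    rw [Measure.prod_restrict]
    exact ae_restrict_mem (measurableSet_Ioc.prod hs)
  have hint : Integrable (fun q : ℝ × α => f q.2 * g q.1 q.2)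
      ((volume.restrict (Ioc a b)).prod (μ.restrict s)) := by
    refine Integrable.mono' ((hf.norm.comp_snd _).const_mul C) (hf.1.comp_snd.mul hg) ?_
    filter_upwards [hmem] with q hq
    rw [norm_mul, mul_comm C]
    exact mul_le_mul_of_nonneg_left (hgC q.1 hq.1 q.2 hq.2) (norm_nonneg _)
  simp_rw [intervalIntegral.integral_of_le hab, ← integral_const_mul]
  exact integral_integral_swap (f := fun t x => f x * g t x) hint

namespace Matrix

variable {ι : Type*} [Fintype ι] [DecidableEq ι]

theorem trace_mul_inv_mul_det {R : Type*} [CommRing R] (M A : Matrix ι ι R) (hA : IsUnit A.det) :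
    (M * A⁻¹).trace * A.det = (M * A.adjugate).trace := by
  rw [inv_def, Matrix.mul_smul, trace_smul, smul_eq_mul, mul_comm, ← mul_assoc,
    Ring.mul_inverse_cancel _ hA, one_mul]

section NontriviallyNormedField

variable {𝕜 : Type*} [NontriviallyNormedField 𝕜]

open Polynomial in
theorem hasDerivAt_det_one_add_smul_zero (M : Matrix ι ι 𝕜) :
    HasDerivAt (fun t : 𝕜 => (1 + t • M).det) M.trace 0 := by
  have h := (det (1 + (X : 𝕜[X]) • M.map C)).hasDerivAt 0
  rw [derivative_det_one_add_X_smul] at h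
  convert h using 1
  ext t
  simp [eval_det, ← smul_eq_mul_diagonal]

theorem hasDerivAt_det_one_add_smul (M : Matrix ι ι 𝕜) {t : 𝕜} (ht : IsUnit (1 + t • M)) :
    HasDerivAt (fun s : 𝕜 => (1 + s • M).det) (M * (1 + t • M).adjugate).trace t := by
  set A := 1 + t • M with hA_def
  have hA : IsUnit A.det := (isUnit_iff_isUnit_det A).1 ht
  have hfactor : ∀ s : 𝕜, (1 + s • M).det = A.det * (1 + (s - t) • (A⁻¹ * M)).det := by
    intro s
    rw [← det_mul, Matrix.mul_add, Matrix.mul_one, Matrix.mul_smul,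
      mul_nonsing_inv_cancel_left A M hA, sub_smul, hA_def]
    abel_nf
  have hderiv₀ := hasDerivAt_det_one_add_smul_zero (A⁻¹ * M)
  rw [← sub_self t] at hderiv₀
  have hderiv := (hderiv₀.comp_sub_const t t).const_mul A.det
  rw [funext hfactor]
  refine hderiv.congr_deriv ?_
  rw [← trace_mul_inv_mul_det M A hA, trace_mul_comm, mul_comm]

end NontriviallyNormedField

theorem intervalIntegral_trace_mul_adjugate_one_add_smul (M : Matrix ι ι ℝ) {a b : ℝ}
    (h : ∀ t ∈ uIcc a b, IsUnit (1 + t • M)) :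
    ∫ t in a..b, (M * (1 + t • M).adjugate).trace = (1 + b • M).det - (1 + a • M).det := by
  refine intervalIntegral.integral_eq_sub_of_hasDerivAt
    (fun t ht => hasDerivAt_det_one_add_smul M (h t ht)) (Continuous.intervalIntegrable ?_ a b)
  fun_prop

section EuclideanCLM

variable {𝕜 : Type*} [RCLike 𝕜]

theorem continuous_toEuclideanCLM_symm :
    Continuous (toEuclideanCLM (𝕜 := 𝕜) (n := ι)).symm :=
  LinearMap.continuous_of_finiteDimensional
    ((toEuclideanCLM (𝕜 := 𝕜) (n := ι)).symm.toAlgEquiv.toLinearMap :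
      (EuclideanSpace 𝕜 ι →L[𝕜] EuclideanSpace 𝕜 ι) →ₗ[𝕜] Matrix ι ι 𝕜)

theorem det_toEuclideanCLM (M : Matrix ι ι 𝕜) : (toEuclideanCLM (𝕜 := 𝕜) M).det = M.det :=
  LinearMap.det_toLin _ M

theorem trace_toEuclideanCLM (M : Matrix ι ι 𝕜) :
    LinearMap.trace 𝕜 _ (toEuclideanCLM (𝕜 := 𝕜) M).toLinearMap = M.trace :=
  trace_toLin_eq M _

theorem isUnit_one_add_smul_toEuclideanCLM_symm
    {L : EuclideanSpace 𝕜 ι →L[𝕜] EuclideanSpace 𝕜 ι} (hL : ‖L‖ < 1) {t : 𝕜} (ht : ‖t‖ ≤ 1) :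
    IsUnit (1 + t • (toEuclideanCLM (𝕜 := 𝕜) (n := ι)).symm L) := by
  have hnorm : ‖t • L‖ < 1 :=
    (norm_smul_le t L).trans_lt (mul_lt_one_of_nonneg_of_lt_one_right ht (norm_nonneg L) hL)
  simpa using (isUnit_one_add_of_norm_lt_one hnorm).map (toEuclideanCLM (𝕜 := 𝕜) (n := ι)).symm

theorem trace_comp_ringInverse_one_add_smul_mul_det (M : Matrix ι ι 𝕜) {t : 𝕜}
    (ht : IsUnit (1 + t • M)) :
    LinearMap.trace 𝕜 _ ((toEuclideanCLM (𝕜 := 𝕜) M).comp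
        (Ring.inverse (1 + t • toEuclideanCLM (𝕜 := 𝕜) M))).toLinearMap
        * (1 + t • toEuclideanCLM (𝕜 := 𝕜) M).det
      = (M * (1 + t • M).adjugate).trace := by
  have hA : IsUnit (1 + t • M).det := (isUnit_iff_isUnit_det _).1 ht
  rw [← map_smul, ← map_one (toEuclideanCLM (𝕜 := 𝕜) (n := ι)), ← map_add, ← map_ringInverse,
    ← nonsing_inv_eq_ringInverse, ← ContinuousLinearMap.mul_def, ← map_mul,
    trace_toEuclideanCLM, det_toEuclideanCLM, trace_mul_inv_mul_det M _ hA]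

end EuclideanCLM

end Matrix

theorem stmt13_general (n : ℕ)
    (Ω : Set (EuclideanSpace ℝ (Fin n))) (hΩo : IsOpen Ω) (hΩb : Bornology.IsBounded Ω)
    (e : EuclideanSpace ℝ (Fin n) → EuclideanSpace ℝ (Fin n)) (he : ContDiff ℝ 1 e)
    (hbound : ∀ p ∈ Ω, ‖fderiv ℝ e p‖ ≤ 1 / 2)
    (w z : EuclideanSpace ℝ (Fin n) → ℝ)
    (hint : IntegrableOn (fun p => w p * z p) Ω) :
    (∫ p in Ω, w p * z p * (1 + fderiv ℝ e p).det) - ∫ p in Ω, w p * z p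
      = ∫ θ in (0:ℝ)..1, ∫ p in Ω,
          w p * z p
            * LinearMap.trace ℝ (EuclideanSpace ℝ (Fin n))
                ((fderiv ℝ e p).comp (Ring.inverse (1 + θ • fderiv ℝ e p))).toLinearMap
            * (1 + θ • fderiv ℝ e p).det := by
  set M : EuclideanSpace ℝ (Fin n) → Matrix (Fin n) (Fin n) ℝ :=
    fun p => (Matrix.toEuclideanCLM (𝕜 := ℝ)).symm (fderiv ℝ e p)
  have hM : ∀ p, fderiv ℝ e p = Matrix.toEuclideanCLM (𝕜 := ℝ) (M p) := fun p =>
    (StarAlgEquiv.apply_symm_apply _ _).symm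
  have hMcont : Continuous M :=
    Matrix.continuous_toEuclideanCLM_symm.comp (he.continuous_fderiv one_ne_zero)
  have hunit : ∀ p ∈ Ω, ∀ θ ∈ uIcc (0:ℝ) 1, IsUnit (1 + θ • M p) := fun p hp θ hθ => by
    rw [uIcc_of_le zero_le_one] at hθ
    exact Matrix.isUnit_one_add_smul_toEuclideanCLM_symm ((hbound p hp).trans_lt one_half_lt_one)
      ((Real.norm_of_nonneg hθ.1).trans_le hθ.2)
  set g : ℝ → EuclideanSpace ℝ (Fin n) → ℝ := fun θ p => (M p * (1 + θ • M p).adjugate).trace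
  have hg : Continuous (Function.uncurry g) := by fun_prop
  obtain ⟨C, hC⟩ := (isCompact_Icc.prod hΩb.isCompact_closure).exists_bound_of_continuousOn
    hg.continuousOn
  have hdet : IntegrableOn (fun p => w p * z p * (1 + M p).det) Ω :=
    hint.mul_continuousOn_of_subset (by fun_prop) hΩo.measurableSet hΩb.isCompact_closure
      subset_closure
  calc _ = (∫ p in Ω, w p * z p * (1 + M p).det) - ∫ p in Ω, w p * z p := by
        congr 1
        refine setIntegral_congr_fun hΩo.measurableSet fun p _ => ?_
        simp only [hM p, ← Matrix.det_toEuclideanCLM, map_add, map_one]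
    _ = ∫ p in Ω, w p * z p * ∫ θ in (0:ℝ)..1, g θ p := by
        rw [← integral_sub hdet hint]
        refine setIntegral_congr_fun hΩo.measurableSet fun p hp => ?_
        rw [Matrix.intervalIntegral_trace_mul_adjugate_one_add_smul _ (hunit p hp)]
        simp [mul_sub]
    _ = ∫ θ in (0:ℝ)..1, ∫ p in Ω, w p * z p * g θ p :=
        (intervalIntegral_setIntegral_mul_swap hΩo.measurableSet zero_le_one hint
          hg.aestronglyMeasurable fun θ hθ p hp =>
            hC (θ, p) ⟨Ioc_subset_Icc_self hθ, subset_closure hp⟩).symm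
    _ = _ := intervalIntegral.integral_congr fun θ hθ =>
        setIntegral_congr_fun hΩo.measurableSet fun p hp => by
          simp only [g, mul_assoc, hM p,
            Matrix.trace_comp_ringInverse_one_add_smul_mul_det _ (hunit p hp θ hθ)]

/-- Pullback form of the mass-matrix difference identity (Lemma 5.1, first identity):
∫_Ω wz·det(I + De) − ∫_Ω wz = ∫₀¹ ∫_Ω wz · tr(De(I + θDe)⁻¹) · det(I + θDe) dp dθ. -/
theorem stmt13 (n : ℕ) (hn : 1 ≤ n)
    (Ω : Set (EuclideanSpace ℝ (Fin n))) (hΩo : IsOpen Ω) (hΩb : Bornology.IsBounded Ω)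
    (e : EuclideanSpace ℝ (Fin n) → EuclideanSpace ℝ (Fin n)) (he : ContDiff ℝ 1 e)
    (hbound : ∀ p ∈ Ω, ‖fderiv ℝ e p‖ ≤ 1 / 2)
    (w z : EuclideanSpace ℝ (Fin n) → ℝ) (hw : Measurable w) (hz : Measurable z)
    (hint : IntegrableOn (fun p => w p * z p) Ω) :
    (∫ p in Ω, w p * z p * (1 + fderiv ℝ e p).det) - ∫ p in Ω, w p * z p
      = ∫ θ in (0:ℝ)..1, ∫ p in Ω,
          w p * z p
            * LinearMap.trace ℝ (EuclideanSpace ℝ (Fin n))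
                ((fderiv ℝ e p).comp (Ring.inverse (1 + θ • fderiv ℝ e p))).toLinearMap
            * (1 + θ • fderiv ℝ e p).det :=
  stmt13_general n Ω hΩo hΩb e he hbound w z hint
end

section
/- Let n ≥ 1, let Ω ⊆ ℝⁿ be a bounded open set, let e : ℝⁿ → ℝⁿ be continuously differentiable with operator norm ‖De(p)‖ ≤ 1/2 for all p ∈ Ω, and let g, h : Ω → ℝⁿ be measurable with ‖g‖·‖h‖ Lebesgue integrable on Ω. For θ ∈ [0,1] and p ∈ Ω set J_θ(p) = Iₙ + θ De(p), E_θ(p) = De(p) J_θ(p)⁻¹, and D_θ(p) = tr(E_θ(p)) Iₙ − E_θ(p) − E_θ(p)ᵀ. Then ∫_Ω ( J₁(p)⁻ᵀ g(p) ) · ( J₁(p)⁻ᵀ h(p) ) det J₁(p) dp − ∫_Ω g(p)·h(p) dp = ∫₀¹ ( ∫_Ω ( J_θ(p)⁻ᵀ g(p) ) · ( D_θ(p) ( J_θ(p)⁻ᵀ h(p) ) ) det J_θ(p) dp ) dθ, where · denotes the Euclidean inner product on ℝⁿ and J⁻ᵀ the inverse transpose. -/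
open MeasureTheory

noncomputable section

/-- J_θ(p) = Iₙ + θ De(p). -/
def Jmap {n : ℕ} (e : EuclideanSpace ℝ (Fin n) → EuclideanSpace ℝ (Fin n)) (θ : ℝ)
    (p : EuclideanSpace ℝ (Fin n)) :
    EuclideanSpace ℝ (Fin n) →L[ℝ] EuclideanSpace ℝ (Fin n) :=
  1 + θ • fderiv ℝ e p

/-- E_θ(p) = De(p) J_θ(p)⁻¹. -/
def Emap {n : ℕ} (e : EuclideanSpace ℝ (Fin n) → EuclideanSpace ℝ (Fin n)) (θ : ℝ)
    (p : EuclideanSpace ℝ (Fin n)) :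
    EuclideanSpace ℝ (Fin n) →L[ℝ] EuclideanSpace ℝ (Fin n) :=
  (fderiv ℝ e p).comp (Ring.inverse (Jmap e θ p))

/-- D_θ(p) = tr(E_θ(p)) Iₙ − E_θ(p) − E_θ(p)ᵀ. -/
def Dmap {n : ℕ} (e : EuclideanSpace ℝ (Fin n) → EuclideanSpace ℝ (Fin n)) (θ : ℝ)
    (p : EuclideanSpace ℝ (Fin n)) :
    EuclideanSpace ℝ (Fin n) →L[ℝ] EuclideanSpace ℝ (Fin n) :=
  (LinearMap.trace ℝ (EuclideanSpace ℝ (Fin n)) (Emap e θ p).toLinearMap) • 1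
    - Emap e θ p - ContinuousLinearMap.adjoint (Emap e θ p)

/-- J_θ(p)⁻ᵀ, the inverse transpose of J_θ(p). -/
def JinvT {n : ℕ} (e : EuclideanSpace ℝ (Fin n) → EuclideanSpace ℝ (Fin n)) (θ : ℝ)
    (p : EuclideanSpace ℝ (Fin n)) :
    EuclideanSpace ℝ (Fin n) →L[ℝ] EuclideanSpace ℝ (Fin n) :=
  ContinuousLinearMap.adjoint (Ring.inverse (Jmap e θ p))

end

/-!
Both sides come from integrating over `θ ∈ [0,1]` the `θ`-derivative of
`F(θ, p) = (J_θ⁻ᵀ g)·(J_θ⁻ᵀ h) det J_θ`, which equals `g·h` at `θ = 0`. Differentiating the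
inverse gives `∂_θ J_θ⁻ᵀ = -E_θᵀ J_θ⁻ᵀ`, and Jacobi's formula gives
`∂_θ det J_θ = tr(E_θ) det J_θ`, so `∂_θ F` is exactly `(J_θ⁻ᵀ g)·D_θ(J_θ⁻ᵀ h) det J_θ`.
The fundamental theorem of calculus in `θ` and Fubini conclude. Fubini applies because on the
compact set `closure Ω × [0,1]` the bound `‖θ De‖ ≤ 1/2` keeps `J_θ` invertible, so
`J_θ⁻ᵀ`, `D_θ` and `det J_θ` are continuous there, hence bounded, and the integrand is dominated
by `C ‖g‖ ‖h‖`.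
-/

open ContinuousLinearMap Set

section Jacobi

variable {E : Type*} [NormedAddCommGroup E] [NormedSpace ℝ E] [FiniteDimensional ℝ E]

open Polynomial in
theorem ContinuousLinearMap.hasDerivAt_det_one_add_smul_zero (A : E →L[ℝ] E) :
    HasDerivAt (fun t : ℝ => (1 + t • A).det) (LinearMap.trace ℝ E A) 0 := by
  classical
  let b := Module.finBasis ℝ E
  let M := LinearMap.toMatrix b b A
  set P : ℝ[X] := Matrix.det (1 + (X : ℝ[X]) • M.map C) with hP
  have hdet : (fun t : ℝ => (1 + t • A).det) = fun t => P.eval t := by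
    funext t
    rw [ContinuousLinearMap.det, ← LinearMap.det_toMatrix b, hP, ← coe_evalRingHom,
      RingHom.map_det]
    congr 1
    ext i j
    by_cases hij : i = j <;> simp [M, hij, mul_comm t]
  rw [hdet, LinearMap.trace_eq_matrix_trace ℝ b, ← Matrix.derivative_det_one_add_X_smul]
  exact P.hasDerivAt 0

theorem ContinuousLinearMap.hasDerivAt_det_one_add_smul (A : E →L[ℝ] E) {θ : ℝ}
    (hθ : IsUnit (1 + θ • A)) :
    HasDerivAt (fun t : ℝ => (1 + t • A).det)
      ((1 + θ • A).det * LinearMap.trace ℝ E (A * Ring.inverse (1 + θ • A) : E →L[ℝ] E)) θ := by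
  obtain ⟨u, hu⟩ := hθ
  set B : E →L[ℝ] E := ↑u⁻¹ * A
  have hfactor : ∀ t : ℝ, 1 + t • A = u * (1 + (t - θ) • B) := by
    intro t
    rw [mul_add, mul_one, mul_smul_comm, ← mul_assoc, u.mul_inv, one_mul, hu, sub_smul]
    abel
  have hdet : (fun t : ℝ => (1 + t • A).det)
      = fun t => (u : E →L[ℝ] E).det * (1 + (t - θ) • B).det :=
    funext fun t => by rw [hfactor t]; exact LinearMap.det_comp _ _
  have hshift : HasDerivAt (fun t : ℝ => (1 + (t - θ) • B).det) (LinearMap.trace ℝ E B) θ :=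
    HasDerivAt.comp_sub_const θ θ (by rw [sub_self]; exact hasDerivAt_det_one_add_smul_zero B)
  have htrace : LinearMap.trace ℝ E (A * ↑u⁻¹ : E →L[ℝ] E) = LinearMap.trace ℝ E B :=
    LinearMap.trace_mul_comm ℝ (A : E →ₗ[ℝ] E) (↑u⁻¹ : E →L[ℝ] E)
  rw [← hu, Ring.inverse_unit, htrace, hdet]
  exact hshift.const_mul (u : E →L[ℝ] E).det

end Jacobi

section RingInverse

variable {R : Type*} [NormedRing R] [HasSummableGeomSeries R]

theorem ContinuousOn.ringInverse {X : Type*} [TopologicalSpace X] {f : X → R} {s : Set X}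
    (hf : ContinuousOn f s) (hs : ∀ x ∈ s, IsUnit (f x)) :
    ContinuousOn (fun x => Ring.inverse (f x)) s := by
  intro x hx
  obtain ⟨u, hu⟩ := hs x hx
  exact (hu ▸ NormedRing.inverse_continuousAt u).comp_continuousWithinAt (hf x hx)

theorem hasDerivAt_ringInverse_one_add_smul [NormedAlgebra ℝ R] (A : R) {θ : ℝ}
    (hθ : IsUnit (1 + θ • A)) :
    HasDerivAt (fun t : ℝ => Ring.inverse (1 + t • A))
      (-(Ring.inverse (1 + θ • A) * A * Ring.inverse (1 + θ • A))) θ := by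
  obtain ⟨u, hu⟩ := hθ
  have hpath : HasDerivAt (fun t : ℝ => 1 + t • A) A θ := by
    simpa using ((hasDerivAt_id θ).smul_const A).const_add 1
  have hinv := hasFDerivAt_ringInverse (𝕜 := ℝ) u
  rw [hu] at hinv
  rw [← hu, Ring.inverse_unit]
  simpa [Function.comp_def] using hinv.comp_hasDerivAt θ hpath

end RingInverse

theorem abs_inner_apply_mul_le {E : Type*} [NormedAddCommGroup E] [InnerProductSpace ℝ E]
    (W T : E →L[ℝ] E) (d : ℝ) (u v : E) :
    |inner ℝ (W u) (T (W v)) * d| ≤ ‖W‖ ^ 2 * ‖T‖ * |d| * (‖u‖ * ‖v‖) := by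
  have hinner : |inner ℝ (W u) (T (W v))| ≤ ‖W‖ * ‖u‖ * (‖T‖ * (‖W‖ * ‖v‖)) :=
    (abs_real_inner_le_norm _ _).trans <| mul_le_mul (W.le_opNorm u)
      ((T.le_opNorm _).trans (mul_le_mul_of_nonneg_left (W.le_opNorm v) (norm_nonneg T)))
      (norm_nonneg _) (by positivity)
  rw [abs_mul]
  calc |inner ℝ (W u) (T (W v))| * |d| ≤ ‖W‖ * ‖u‖ * (‖T‖ * (‖W‖ * ‖v‖)) * |d| :=
        mul_le_mul_of_nonneg_right hinner (abs_nonneg d)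
    _ = ‖W‖ ^ 2 * ‖T‖ * |d| * (‖u‖ * ‖v‖) := by ring

theorem integral_sub_eq_intervalIntegral_integral_of_hasDerivAt {X : Type*} [MeasurableSpace X]
    {μ : Measure X} [SFinite μ] {F G : ℝ → X → ℝ} {a b : ℝ} (hab : a ≤ b)
    (hF : ∀ᵐ x ∂μ, ∀ θ ∈ Icc a b, HasDerivAt (F · x) (G θ x) θ)
    (hG : Integrable (Function.uncurry fun x θ => G θ x) (μ.prod (volume.restrict (Ioc a b))))
    (hFa : Integrable (F a) μ) :
    ∫ x, F b x ∂μ - ∫ x, F a x ∂μ = ∫ θ in a..b, ∫ x, G θ x ∂μ := by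
  have hFTC : ∀ᵐ x ∂μ, F b x - F a x = ∫ θ in a..b, G θ x := by
    filter_upwards [hF, hG.prod_right_ae] with x hFx hGx
    rw [← uIcc_of_le hab] at hFx
    exact (intervalIntegral.integral_eq_sub_of_hasDerivAt hFx
      ((intervalIntegrable_iff_integrableOn_Ioc_of_le hab).2 hGx)).symm
  have hFb : Integrable (F b) μ := by
    have hint : Integrable (fun x => ∫ θ in a..b, G θ x) μ := by
      simp_rw [intervalIntegral.integral_of_le hab]
      exact hG.integral_prod_left
    refine (hFa.add hint).congr (hFTC.mono fun x hx => ?_)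
    simp only [Pi.add_apply, ← hx]
    ring
  calc ∫ x, F b x ∂μ - ∫ x, F a x ∂μ = ∫ x, (F b x - F a x) ∂μ := (integral_sub hFb hFa).symm
    _ = ∫ x, (∫ θ in a..b, G θ x) ∂μ := integral_congr_ae hFTC
    _ = ∫ θ in a..b, ∫ x, G θ x ∂μ := by
      simp_rw [intervalIntegral.integral_of_le hab]
      exact integral_integral_swap hG

section Pullback

variable {n : ℕ} {e : EuclideanSpace ℝ (Fin n) → EuclideanSpace ℝ (Fin n)}

local notation "ℝⁿ" => EuclideanSpace ℝ (Fin n)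

theorem Jmap_zero (p : ℝⁿ) : Jmap e 0 p = 1 := by
  rw [Jmap, zero_smul ℝ (fderiv ℝ e p), add_zero]

theorem JinvT_zero (p : ℝⁿ) : JinvT e 0 p = 1 := by
  rw [JinvT, Jmap_zero, Ring.inverse_one, ← star_eq_adjoint, star_one]

theorem hasDerivAt_JinvT_apply (p w : ℝⁿ) {θ : ℝ} (hθ : IsUnit (Jmap e θ p)) :
    HasDerivAt (fun t => JinvT e t p w) (-adjoint (Emap e θ p) (JinvT e θ p w)) θ := by
  have h := (hasDerivAt_ringInverse_one_add_smul (fderiv ℝ e p) hθ).star.clm_apply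
    (hasDerivAt_const θ w)
  simp only [star_neg, star_mul, neg_apply, map_zero, add_zero] at h
  have hE : adjoint (Emap e θ p) (JinvT e θ p w) = (star (Ring.inverse (Jmap e θ p)) *
      (star (fderiv ℝ e p) * star (Ring.inverse (Jmap e θ p)))) w := by
    rw [Emap, ← mul_def, ← star_eq_adjoint, star_mul]; rfl
  rw [hE]
  exact h

theorem hasDerivAt_inner_JinvT_mul_det (p u v : ℝⁿ) {θ : ℝ} (hθ : IsUnit (Jmap e θ p)) :
    HasDerivAt (fun t => inner ℝ (JinvT e t p u) (JinvT e t p v) * (Jmap e t p).det)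
      (inner ℝ (JinvT e θ p u) (Dmap e θ p (JinvT e θ p v)) * (Jmap e θ p).det) θ := by
  have h := ((hasDerivAt_JinvT_apply p u hθ).inner ℝ (hasDerivAt_JinvT_apply p v hθ)).mul
    ((fderiv ℝ e p).hasDerivAt_det_one_add_smul hθ)
  refine h.congr_deriv ?_
  change (_ + _) * (Jmap e θ p).det
      + _ * ((Jmap e θ p).det * LinearMap.trace ℝ _ (Emap e θ p).toLinearMap) = _
  simp only [Dmap, sub_apply, smul_apply, one_apply_eq_self, inner_sub_right, inner_smul_right,
    inner_neg_left, inner_neg_right, adjoint_inner_left]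
  ring

theorem continuous_Jmap (he : ContDiff ℝ 1 e) : Continuous fun z : ℝⁿ × ℝ => Jmap e z.2 z.1 :=
  continuous_const.add
    (continuous_snd.smul ((he.continuous_fderiv one_ne_zero).comp continuous_fst))

variable {s : Set (EuclideanSpace ℝ (Fin n) × ℝ)}

theorem continuousOn_JinvT (he : ContDiff ℝ 1 e) (hs : ∀ z ∈ s, IsUnit (Jmap e z.2 z.1)) :
    ContinuousOn (fun z => JinvT e z.2 z.1) s :=
  (adjoint (𝕜 := ℝ) (E := ℝⁿ) (F := ℝⁿ)).continuous.comp_continuousOn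
    ((continuous_Jmap he).continuousOn.ringInverse hs)

theorem continuousOn_Dmap (he : ContDiff ℝ 1 e) (hs : ∀ z ∈ s, IsUnit (Jmap e z.2 z.1)) :
    ContinuousOn (fun z => Dmap e z.2 z.1) s := by
  have hE : ContinuousOn (fun z => Emap e z.2 z.1) s :=
    ((he.continuous_fderiv one_ne_zero).comp continuous_fst).continuousOn.mul
      ((continuous_Jmap he).continuousOn.ringInverse hs)
  have htrace : Continuous fun T : ℝⁿ →L[ℝ] ℝⁿ => LinearMap.trace ℝ ℝⁿ T.toLinearMap :=
    ((LinearMap.trace ℝ ℝⁿ).comp (coeLM ℝ)).continuous_of_finiteDimensional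
  exact (((htrace.comp_continuousOn hE).smul continuousOn_const).sub hE).sub
    ((adjoint (𝕜 := ℝ) (E := ℝⁿ) (F := ℝⁿ)).continuous.comp_continuousOn hE)

theorem IsCompact.exists_bound_of_isUnit_Jmap (hs : IsCompact s) (he : ContDiff ℝ 1 e)
    (hunit : ∀ z ∈ s, IsUnit (Jmap e z.2 z.1)) :
    ∃ C, ∀ z ∈ s, ‖JinvT e z.2 z.1‖ ^ 2 * ‖Dmap e z.2 z.1‖ * |(Jmap e z.2 z.1).det| ≤ C := by
  obtain ⟨C, hC⟩ := hs.exists_bound_of_continuousOn <|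
    (((continuousOn_JinvT he hunit).norm.pow 2).mul (continuousOn_Dmap he hunit).norm).mul
      (ContinuousLinearMap.continuous_det.comp (continuous_Jmap he)).abs.continuousOn
  exact ⟨C, fun z hz => (le_abs_self _).trans (hC z hz)⟩

theorem aestronglyMeasurable_inner_JinvT_Dmap_mul_det (he : ContDiff ℝ 1 e) (hs : MeasurableSet s)
    (hunit : ∀ z ∈ s, IsUnit (Jmap e z.2 z.1)) {g h : ℝⁿ → ℝⁿ} (hg : Measurable g)
    (hh : Measurable h) :
    AEStronglyMeasurable (fun z : ℝⁿ × ℝ => inner ℝ (JinvT e z.2 z.1 (g z.1))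
      (Dmap e z.2 z.1 (JinvT e z.2 z.1 (h z.1))) * (Jmap e z.2 z.1).det) (volume.restrict s) := by
  have hW := (continuousOn_JinvT he hunit).aestronglyMeasurable (μ := volume) hs
  have hD := (continuousOn_Dmap he hunit).aestronglyMeasurable (μ := volume) hs
  have happly : ∀ {T : ℝⁿ × ℝ → ℝⁿ →L[ℝ] ℝⁿ} {w : ℝⁿ × ℝ → ℝⁿ},
      AEStronglyMeasurable T (volume.restrict s) → AEStronglyMeasurable w (volume.restrict s) →
      AEStronglyMeasurable (fun z => T z (w z)) (volume.restrict s) :=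
    fun hT hw => isBoundedBilinearMap_apply.continuous.comp_aestronglyMeasurable (hT.prodMk hw)
  have hWg := happly hW (hg.comp measurable_fst).aestronglyMeasurable
  have hWh := happly hW (hh.comp measurable_fst).aestronglyMeasurable
  have hdet : AEStronglyMeasurable (fun z : ℝⁿ × ℝ => (Jmap e z.2 z.1).det) (volume.restrict s) :=
    (ContinuousLinearMap.continuous_det.comp (continuous_Jmap he)).aestronglyMeasurable
  exact (hWg.inner (happly hD hWh)).mul hdet

theorem inner_JinvT_zero_mul_det (p u v : ℝⁿ) :
    inner ℝ (JinvT e 0 p u) (JinvT e 0 p v) * (Jmap e 0 p).det = inner ℝ u v := by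
  rw [JinvT_zero, Jmap_zero, one_apply_eq_self, one_apply_eq_self,
    show (1 : ℝⁿ →L[ℝ] ℝⁿ).det = 1 from LinearMap.det_id, mul_one]

theorem isUnit_Jmap_of_mem_closure (he : ContDiff ℝ 1 e) {Ω : Set ℝⁿ}
    (hbound : ∀ p ∈ Ω, ‖fderiv ℝ e p‖ ≤ 1 / 2) :
    ∀ z ∈ closure Ω ×ˢ Icc (0 : ℝ) 1, IsUnit (Jmap e z.2 z.1) := by
  rintro ⟨p, θ⟩ ⟨hp, hθ⟩
  have hp' : ‖fderiv ℝ e p‖ ≤ 1 / 2 :=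
    closure_minimal hbound (isClosed_le (he.continuous_fderiv one_ne_zero).norm continuous_const) hp
  have hsmall : ‖-(θ • fderiv ℝ e p)‖ < 1 := by
    rw [norm_neg, norm_smul, Real.norm_of_nonneg hθ.1]
    nlinarith [hθ.2, norm_nonneg (fderiv ℝ e p)]
  simpa [Jmap] using isUnit_one_sub_of_norm_lt_one hsmall

theorem integrable_inner_JinvT_Dmap_mul_det (he : ContDiff ℝ 1 e) {Ω : Set ℝⁿ}
    (hΩ : MeasurableSet Ω) (hΩb : Bornology.IsBounded Ω)
    (hbound : ∀ p ∈ Ω, ‖fderiv ℝ e p‖ ≤ 1 / 2) {g h : ℝⁿ → ℝⁿ} (hg : Measurable g)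
    (hh : Measurable h) (hint : IntegrableOn (fun p => ‖g p‖ * ‖h p‖) Ω) :
    Integrable (Function.uncurry fun p θ =>
        inner ℝ (JinvT e θ p (g p)) (Dmap e θ p (JinvT e θ p (h p))) * (Jmap e θ p).det)
      ((volume.restrict Ω).prod (volume.restrict (Ioc 0 1))) := by
  have hunit := isUnit_Jmap_of_mem_closure he hbound
  obtain ⟨C, hC⟩ :=
    (hΩb.isCompact_closure.prod isCompact_Icc).exists_bound_of_isUnit_Jmap he hunit
  have hsub : Ω ×ˢ Ioc (0 : ℝ) 1 ⊆ closure Ω ×ˢ Icc 0 1 :=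
    prod_mono subset_closure Ioc_subset_Icc_self
  have hmeas : MeasurableSet (Ω ×ˢ Ioc (0 : ℝ) 1) := hΩ.prod measurableSet_Ioc
  refine ((hint.const_mul C).comp_fst _).mono' ?_ ?_ <;> rw [Measure.prod_restrict]
  · exact aestronglyMeasurable_inner_JinvT_Dmap_mul_det he hmeas (fun z hz => hunit z (hsub hz))
      hg hh
  · filter_upwards [ae_restrict_mem hmeas] with z hz
    rw [Real.norm_eq_abs]
    exact (abs_inner_apply_mul_le _ _ _ _ _).trans
      (mul_le_mul_of_nonneg_right (hC z (hsub hz)) (by positivity))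

end Pullback

theorem stmt14_general (n : ℕ)
    (Ω : Set (EuclideanSpace ℝ (Fin n))) (hΩo : IsOpen Ω) (hΩb : Bornology.IsBounded Ω)
    (e : EuclideanSpace ℝ (Fin n) → EuclideanSpace ℝ (Fin n)) (he : ContDiff ℝ 1 e)
    (hbound : ∀ p ∈ Ω, ‖fderiv ℝ e p‖ ≤ 1 / 2)
    (g h : EuclideanSpace ℝ (Fin n) → EuclideanSpace ℝ (Fin n))
    (hg : Measurable g) (hh : Measurable h)
    (hint : IntegrableOn (fun p => ‖g p‖ * ‖h p‖) Ω) :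
    (∫ p in Ω, (inner ℝ (JinvT e 1 p (g p)) (JinvT e 1 p (h p)) : ℝ) * (Jmap e 1 p).det)
        - ∫ p in Ω, (inner ℝ (g p) (h p) : ℝ)
      = ∫ θ in (0:ℝ)..1, ∫ p in Ω,
          (inner ℝ (JinvT e θ p (g p)) (Dmap e θ p (JinvT e θ p (h p))) : ℝ)
            * (Jmap e θ p).det := by
  have hΩ : MeasurableSet Ω := hΩo.measurableSet
  have hunit := isUnit_Jmap_of_mem_closure he hbound
  have hF0 : ∀ p, inner ℝ (g p) (h p)
      = inner ℝ (JinvT e 0 p (g p)) (JinvT e 0 p (h p)) * (Jmap e 0 p).det :=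
    fun p => (inner_JinvT_zero_mul_det p _ _).symm
  simp_rw [hF0]
  refine integral_sub_eq_intervalIntegral_integral_of_hasDerivAt
    (F := fun θ p => inner ℝ (JinvT e θ p (g p)) (JinvT e θ p (h p)) * (Jmap e θ p).det)
    zero_le_one ?_
    (integrable_inner_JinvT_Dmap_mul_det he hΩ hΩb hbound hg hh hint) ?_
  · filter_upwards [ae_restrict_mem hΩ] with p hp θ hθ
    exact hasDerivAt_inner_JinvT_mul_det p _ _ (hunit (p, θ) ⟨subset_closure hp, hθ⟩)
  · simp_rw [← hF0]
    exact hint.mono' (hg.aestronglyMeasurable.inner hh.aestronglyMeasurable)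
      (ae_of_all _ fun p => by simpa only [Real.norm_eq_abs] using abs_real_inner_le_norm _ _)

/-- Pullback form of the stiffness-matrix difference identity (Lemma 5.1, second identity):
∫_Ω (J₁⁻ᵀg)·(J₁⁻ᵀh) det J₁ − ∫_Ω g·h = ∫₀¹ ∫_Ω (J_θ⁻ᵀg)·(D_θ (J_θ⁻ᵀh)) det J_θ dp dθ. -/
theorem stmt14 (n : ℕ) (hn : 1 ≤ n)
    (Ω : Set (EuclideanSpace ℝ (Fin n))) (hΩo : IsOpen Ω) (hΩb : Bornology.IsBounded Ω)
    (e : EuclideanSpace ℝ (Fin n) → EuclideanSpace ℝ (Fin n)) (he : ContDiff ℝ 1 e)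
    (hbound : ∀ p ∈ Ω, ‖fderiv ℝ e p‖ ≤ 1 / 2)
    (g h : EuclideanSpace ℝ (Fin n) → EuclideanSpace ℝ (Fin n))
    (hg : Measurable g) (hh : Measurable h)
    (hint : IntegrableOn (fun p => ‖g p‖ * ‖h p‖) Ω) :
    (∫ p in Ω, (inner ℝ (JinvT e 1 p (g p)) (JinvT e 1 p (h p)) : ℝ) * (Jmap e 1 p).det)
        - ∫ p in Ω, (inner ℝ (g p) (h p) : ℝ)
      = ∫ θ in (0:ℝ)..1, ∫ p in Ω,
          (inner ℝ (JinvT e θ p (g p)) (Dmap e θ p (JinvT e θ p (h p))) : ℝ)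
            * (Jmap e θ p).det :=
  stmt14_general n Ω hΩo hΩb e he hbound g h hg hh hint
end
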